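/- Let m ≥ 1 be a natural number and let s be a real number with s > -m. Define Q_k = (2m+s)·Γ(m+s+2+s/m)·Γ(k+s) / (m·Γ(m+s)·Γ(k+s+3+s/m)) for k ≥ m. Then k^{(3m+s)/m} · Q_k tends, as k → ∞, to the positive constant (2m+s)·Γ(m+s+2+s/m) / (m·Γ(m+s)); that is, the final vertex degree distribution of the L-graph with parameters (m,s) is asymptotically power-law, Q_k ~ c·k^{-α} with exponent α = (3m+s)/m = 3 + s/m. -/

import Mathlib

/-!
With `a = 3 + s/m`, the quantity `k^a Q_k` is the constant `(2m+s) Γ(m+s+2+s/m) / (m Γ(m+s))`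
times `k^a Γ(k+s) / Γ(k+s+a)`, so it suffices that `Γ(x+a) ~ Γ(x) x^a` as `x → ∞`
(Wendel's limit). For `0 ≤ a ≤ 1` this follows by squeezing with the two inequalities that
log-convexity of `Γ` gives between `x`, `x+a`, `x+1` and `x+a+1`; the recurrence
`Γ(y+1) = y Γ(y)` then carries it from `a` to `a+1`.
-/

open Filter Real Topology

lemma tendsto_div_add_const_atTop (c : ℝ) :
    Tendsto (fun x : ℝ => x / (x + c)) atTop (𝓝 1) := by
  have hc : Tendsto (fun x : ℝ => c / (x + c)) atTop (𝓝 0) :=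
    tendsto_const_nhds.div_atTop (tendsto_atTop_add_const_right _ c tendsto_id)
  have hsub : Tendsto (fun x : ℝ => 1 - c / (x + c)) atTop (𝓝 1) := by
    simpa using tendsto_const_nhds.sub hc
  refine hsub.congr' ?_
  filter_upwards [eventually_gt_atTop (-c)] with x hx
  field_simp [(by linarith : x + c ≠ 0)]
  ring

lemma tendsto_add_const_div_atTop (c : ℝ) :
    Tendsto (fun x : ℝ => (x + c) / x) atTop (𝓝 1) := by
  simpa using (tendsto_div_add_const_atTop c).inv₀ one_ne_zero

namespace Real

lemma Gamma_add_le_Gamma_mul_rpow {a x : ℝ} (ha : 0 ≤ a) (ha1 : a ≤ 1) (hx : 0 < x) :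
    Gamma (x + a) ≤ Gamma x * x ^ a := by
  have hG : 0 < Gamma x := Gamma_pos_of_pos hx
  have hconv := convexOn_log_Gamma.2 (Set.mem_Ioi.2 hx) (Set.mem_Ioi.2 (by linarith : 0 < x + 1))
    (by linarith : 0 ≤ 1 - a) ha (by ring)
  simp only [smul_eq_mul, Function.comp_apply, Gamma_add_one hx.ne'] at hconv
  rw [(by ring : (1 - a) * x + a * (x + 1) = x + a), log_mul hx.ne' hG.ne'] at hconv
  rw [← log_le_log_iff (Gamma_pos_of_pos (by linarith)) (by positivity),
    log_mul hG.ne' (rpow_pos_of_pos hx a).ne', log_rpow hx]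
  linarith

lemma div_add_rpow_le_Gamma_add_div {a x : ℝ} (ha : 0 ≤ a) (ha1 : a ≤ 1) (hx : 0 < x) :
    (x / (x + a)) ^ (1 - a) ≤ Gamma (x + a) / (Gamma x * x ^ a) := by
  have hxa : 0 < x + a := by linarith
  have hG : 0 < Gamma x := Gamma_pos_of_pos hx
  have hGa : 0 < Gamma (x + a) := Gamma_pos_of_pos hxa
  have hconv := convexOn_log_Gamma.2 (Set.mem_Ioi.2 hxa)
    (Set.mem_Ioi.2 (by linarith : 0 < x + a + 1)) ha (by linarith : 0 ≤ 1 - a) (by ring)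
  simp only [smul_eq_mul, Function.comp_apply, Gamma_add_one hxa.ne'] at hconv
  rw [(by ring : a * (x + a) + (1 - a) * (x + a + 1) = x + 1), Gamma_add_one hx.ne',
    log_mul hx.ne' hG.ne', log_mul hxa.ne' hGa.ne'] at hconv
  rw [← log_le_log_iff (by positivity) (by positivity), log_rpow (by positivity),
    log_div hGa.ne' (by positivity), log_mul hG.ne' (rpow_pos_of_pos hx a).ne', log_rpow hx,
    log_div hx.ne' hxa.ne']
  linarith

lemma tendsto_Gamma_add_div_Gamma_mul_rpow_of_le_one {a : ℝ} (ha : 0 ≤ a) (ha1 : a ≤ 1) :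
    Tendsto (fun x : ℝ => Gamma (x + a) / (Gamma x * x ^ a)) atTop (𝓝 1) := by
  have hlower : Tendsto (fun x : ℝ => (x / (x + a)) ^ (1 - a)) atTop (𝓝 1) := by
    simpa using (tendsto_div_add_const_atTop a).rpow_const (p := 1 - a) (Or.inl one_ne_zero)
  refine tendsto_of_tendsto_of_tendsto_of_le_of_le' hlower tendsto_const_nhds ?_ ?_
  · filter_upwards [eventually_gt_atTop 0] with x hx
    exact div_add_rpow_le_Gamma_add_div ha ha1 hx
  · filter_upwards [eventually_gt_atTop 0] with x hx
    rw [div_le_one (by have := Gamma_pos_of_pos hx; positivity)]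
    exact Gamma_add_le_Gamma_mul_rpow ha ha1 hx

lemma tendsto_Gamma_add_div_Gamma_mul_rpow_add_one {a : ℝ}
    (h : Tendsto (fun x : ℝ => Gamma (x + a) / (Gamma x * x ^ a)) atTop (𝓝 1)) :
    Tendsto (fun x : ℝ => Gamma (x + (a + 1)) / (Gamma x * x ^ (a + 1))) atTop (𝓝 1) := by
  have hmul : Tendsto (fun x : ℝ => (x + a) / x * (Gamma (x + a) / (Gamma x * x ^ a))) atTop
      (𝓝 1) := by simpa using (tendsto_add_const_div_atTop a).mul h
  refine hmul.congr' ?_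
  filter_upwards [eventually_gt_atTop (max 0 (-a))] with x hx
  have hx0 : 0 < x := (le_max_left _ _).trans_lt hx
  have hxa : x + a ≠ 0 := by linarith [(le_max_right 0 (-a)).trans_lt hx]
  rw [← add_assoc, Gamma_add_one hxa, rpow_add_one hx0.ne']
  have := Gamma_pos_of_pos hx0
  have := rpow_pos_of_pos hx0 a
  field_simp

theorem tendsto_Gamma_add_div_Gamma_mul_rpow {a : ℝ} (ha : 0 ≤ a) :
    Tendsto (fun x : ℝ => Gamma (x + a) / (Gamma x * x ^ a)) atTop (𝓝 1) := by
  suffices ∀ n : ℕ, ∀ r : ℝ, 0 ≤ r → r ≤ 1 →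
      Tendsto (fun x : ℝ => Gamma (x + (r + n)) / (Gamma x * x ^ (r + n))) atTop (𝓝 1) by
    simpa using this ⌊a⌋₊ (a - ⌊a⌋₊) (by linarith [Nat.floor_le ha])
      (by linarith [Nat.lt_floor_add_one a])
  intro n r hr hr1
  induction n with
  | zero => simpa using tendsto_Gamma_add_div_Gamma_mul_rpow_of_le_one hr hr1
  | succ n ih => simpa [add_assoc] using tendsto_Gamma_add_div_Gamma_mul_rpow_add_one ih

theorem tendsto_rpow_mul_Gamma_add_div_Gamma_add_add {a : ℝ} (ha : 0 ≤ a) (b : ℝ) :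
    Tendsto (fun x : ℝ => x ^ a * Gamma (x + b) / Gamma (x + b + a)) atTop (𝓝 1) := by
  have hshift := (tendsto_Gamma_add_div_Gamma_mul_rpow ha).comp
    (tendsto_atTop_add_const_right _ b tendsto_id)
  have hpow : Tendsto (fun x : ℝ => (x / (x + b)) ^ a) atTop (𝓝 1) := by
    simpa using (tendsto_div_add_const_atTop b).rpow_const (p := a) (Or.inl one_ne_zero)
  have hdiv := hpow.div hshift one_ne_zero
  rw [div_one] at hdiv
  refine hdiv.congr' ?_
  filter_upwards [eventually_gt_atTop (max 0 (-b))] with x hx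
  have hx0 : 0 < x := (le_max_left _ _).trans_lt hx
  have hxb : 0 < x + b := by linarith [(le_max_right 0 (-b)).trans_lt hx]
  have := Gamma_pos_of_pos hxb
  have := Gamma_pos_of_pos (by positivity : 0 < x + b + a)
  have := rpow_pos_of_pos hxb a
  simp only [Pi.div_apply, Function.comp_apply, id]
  rw [div_rpow hx0.le hxb.le]
  field_simp

end Real

/-- The closed-form L-graph VDD is asymptotically power-law with exponent
`α = (3m+s)/m`: `k^α · Q_k` tends to the positive constant
`(2m+s)·Γ(m+s+2+s/m)/(m·Γ(m+s))`. -/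
theorem L_vdd_power_law_asymptotics (m : ℕ) (hm : 1 ≤ m) (s : ℝ) (hs : -(m : ℝ) < s) :
    Tendsto
      (fun k : ℕ =>
        (k : ℝ) ^ ((3 * m + s) / m) *
          ((2 * m + s) * Real.Gamma (m + s + 2 + s / m) * Real.Gamma (k + s) /
            (m * Real.Gamma (m + s) * Real.Gamma (k + s + 3 + s / m))))
      atTop
      (nhds ((2 * m + s) * Real.Gamma (m + s + 2 + s / m) / (m * Real.Gamma (m + s)))) ∧
    0 < (2 * m + s) * Real.Gamma (m + s + 2 + s / m) / (m * Real.Gamma (m + s)) := by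
  have hm0 : (0 : ℝ) < m := by exact_mod_cast hm
  have hsm : -1 < s / m := by rwa [lt_div_iff₀ hm0, neg_one_mul]
  have hexp : (3 * m + s) / m = 3 + s / m := by field_simp
  set C := (2 * m + s) * Gamma (m + s + 2 + s / m) / (m * Gamma (m + s))
  have hC : 0 < C := by
    have := Gamma_pos_of_pos (by linarith : (0 : ℝ) < m + s + 2 + s / m)
    have := Gamma_pos_of_pos (by linarith : (0 : ℝ) < m + s)
    have : (0 : ℝ) < 2 * m + s := by linarith
    positivity
  refine ⟨?_, hC⟩
  have hlim := ((tendsto_rpow_mul_Gamma_add_div_Gamma_add_add (a := 3 + s / m) (by linarith) s).comp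
    tendsto_natCast_atTop_atTop).const_mul C
  rw [mul_one] at hlim
  refine hlim.congr fun k => ?_
  simp only [Function.comp_apply, C, hexp, add_assoc]
  ring
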